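/- Let m ≥ 4 and n ≥ 5 with n odd. The radio number of the stacked-book graph G_{m,n} = S_m □ P_n satisfies rn(G_{m,n}) ≥ (mn² + m + 2n − 4)/2. -/

import Mathlib

open SimpleGraph

/-- The star graph on `m` vertices: vertex `0` is the center, adjacent to all others. -/
def starGraph (m : ℕ) : SimpleGraph (Fin m) :=
  SimpleGraph.fromRel (fun a _ => (a : ℕ) = 0)

/-- The stacked-book graph `G_{m,n} = S_m □ P_n`. -/
def stackedBook (m n : ℕ) : SimpleGraph (Fin m × Fin n) :=
  starGraph m □ SimpleGraph.pathGraph n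

/-- A radio labeling of `G`: `|f u - f v| ≥ diam G + 1 - d(u,v)` for all distinct `u, v`. -/
def IsRadioLabeling {V : Type*} (G : SimpleGraph V) (f : V → ℕ) : Prop :=
  ∀ u v : V, u ≠ v → (G.diam : ℤ) + 1 - G.dist u v ≤ |(f u : ℤ) - (f v : ℤ)|

/-- The span of a labeling on a finite vertex set: max label minus min label. -/
noncomputable def labelSpan {V : Type*} [Fintype V] (f : V → ℕ) : ℕ :=
  Finset.univ.sup f - sInf (Set.range f)

/-- The radio number: minimum span over all radio labelings. -/
noncomputable def radioNumber {V : Type*} [Fintype V] (G : SimpleGraph V) : ℕ :=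
  sInf {s | ∃ f : V → ℕ, IsRadioLabeling G f ∧ labelSpan f = s}

/-!
List the vertices in increasing order of label. Consecutive labels differ by at least
`diam + 1 - d(xᵢ, xᵢ₊₁)`, and the triangle inequality through a fixed vertex `c` gives
`d(xᵢ, xᵢ₊₁) ≤ d(xᵢ, c) + d(xᵢ₊₁, c)`, so summing the gaps,
`span ≥ (N - 1)(diam + 1) - 2 ∑ᵥ d(v, c)`.
In `S_m □ P_n` with `n = 2k + 1`, take `c` to be the centre of the star in the middle layer: then
`d((a, i), c)` is `[a is a leaf] + |i - k|`, so `∑ᵥ d(v, c) = (m - 1)n + m k(k + 1)`,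
while two distinct leaves at opposite ends of the path show `diam ≥ n + 1`.
-/

section RadioLabeling

variable {V : Type*} {G : SimpleGraph V} {f : V → ℕ}

lemma IsRadioLabeling.diam_add_one_le (hf : IsRadioLabeling G f) {u v : V} (huv : u ≠ v)
    (h : f u ≤ f v) : (G.diam : ℤ) + 1 ≤ f v - f u + G.dist u v := by
  have := hf u v huv
  rw [abs_sub_comm, abs_of_nonneg (by omega)] at this
  linarith

variable [Fintype V]

lemma exists_isRadioLabeling (G : SimpleGraph V) : ∃ f : V → ℕ, IsRadioLabeling G f := by
  refine ⟨fun v => (G.diam + 1) * Fintype.equivFin V v, fun u v huv => ?_⟩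
  have hne : ((Fintype.equivFin V u : ℕ) : ℤ) ≠ (Fintype.equivFin V v : ℕ) := by
    simpa [Fin.val_inj] using huv
  have hone : (1 : ℤ) ≤ |((Fintype.equivFin V u : ℕ) : ℤ) - (Fintype.equivFin V v : ℕ)| :=
    Int.one_le_abs (sub_ne_zero.mpr hne)
  push_cast
  rw [← mul_sub, abs_mul, abs_of_nonneg (by positivity)]
  nlinarith

lemma le_radioNumber {b : ℕ} (h : ∀ f, IsRadioLabeling G f → b ≤ labelSpan f) :
    b ≤ radioNumber G := by
  obtain ⟨f, hf⟩ := exists_isRadioLabeling G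
  exact le_csInf ⟨_, f, hf, rfl⟩ fun _ ⟨f, hf, hs⟩ => hs ▸ h f hf

lemma exists_equiv_fin_monotone {β : Type*} [LinearOrder β] (g : V → β) {N : ℕ}
    (hN : Fintype.card V = N) : ∃ e : Fin N ≃ V, Monotone (g ∘ e) := by
  let e₀ : Fin N ≃ V := (Fintype.equivFinOfCardEq hN).symm
  exact ⟨(Tuple.sort (g ∘ e₀)).trans e₀, Tuple.monotone_sort (g ∘ e₀)⟩

lemma labelSpan_eq_of_monotone {N : ℕ} (e : Fin (N + 1) ≃ V) (he : Monotone (f ∘ e)) :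
    labelSpan f = f (e (Fin.last N)) - f (e 0) := by
  have hle : ∀ v, f (e 0) ≤ f v ∧ f v ≤ f (e (Fin.last N)) := fun v => by
    simpa using And.intro (he (Fin.zero_le (e.symm v))) (he (Fin.le_last (e.symm v)))
  have hsup : Finset.univ.sup f = f (e (Fin.last N)) :=
    le_antisymm (Finset.sup_le fun v _ => (hle v).2) (Finset.le_sup (Finset.mem_univ _))
  have hinf : sInf (Set.range f) = f (e 0) :=
    le_antisymm (Nat.sInf_le ⟨_, rfl⟩) (le_csInf ⟨_, e 0, rfl⟩ fun _ ⟨v, hv⟩ => hv ▸ (hle v).1)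
  rw [labelSpan, hsup, hinf]

theorem IsRadioLabeling.card_sub_one_mul_le (hG : G.Connected) (hf : IsRadioLabeling G f)
    (c : V) : (Fintype.card V - 1) * (G.diam + 1) ≤ labelSpan f + 2 * ∑ v, G.dist v c := by
  have := hG.nonempty
  obtain ⟨N, hN⟩ : ∃ N, Fintype.card V = N + 1 :=
    Nat.exists_eq_succ_of_ne_zero Fintype.card_ne_zero
  obtain ⟨e, he⟩ := exists_equiv_fin_monotone f hN
  set F : Fin (N + 1) → ℤ := fun j => f (e j)
  set D : Fin (N + 1) → ℤ := fun j => G.dist (e j) c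
  have hgap : ∀ i : Fin N,
      (G.diam : ℤ) + 1 ≤ F i.succ - F i.castSucc + D i.castSucc + D i.succ := fun i => by
    have hlt : i.castSucc < i.succ := Fin.castSucc_lt_succ
    have := hf.diam_add_one_le (e.injective.ne hlt.ne) (he hlt.le)
    have := hG.dist_triangle (u := e i.castSucc) (v := c) (w := e i.succ)
    rw [dist_comm (u := c)] at this
    simp only [F, D]
    omega
  have hsum := Finset.sum_le_sum fun i (_ : i ∈ Finset.univ) => hgap i
  simp only [Finset.sum_add_distrib, Finset.sum_sub_distrib, Finset.sum_const,
    Finset.card_univ, Fintype.card_fin, nsmul_eq_mul] at hsum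
  have hF₀ := Fin.sum_univ_succ F
  have hF₁ := Fin.sum_univ_castSucc F
  have hD₀ := Fin.sum_univ_succ D
  have hD₁ := Fin.sum_univ_castSucc D
  have hD : ∑ j, D j = ∑ v, (G.dist v c : ℤ) := Equiv.sum_comp e fun v => (G.dist v c : ℤ)
  have hD0 : 0 ≤ D 0 := Nat.cast_nonneg _
  have hDlast : 0 ≤ D (Fin.last N) := Nat.cast_nonneg _
  have hmono : f (e 0) ≤ f (e (Fin.last N)) := he (Fin.zero_le _)
  rw [labelSpan_eq_of_monotone e he, hN]
  zify [hmono]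
  push_cast
  simp only [F] at hF₀ hF₁
  linarith

end RadioLabeling

namespace SimpleGraph

lemma dist_boxProd {α β : Type*} {G : SimpleGraph α} {H : SimpleGraph β} (hG : G.Preconnected)
    (hH : H.Preconnected) (x y : α × β) :
    (G □ H).dist x y = G.dist x.1 y.1 + H.dist x.2 y.2 := by
  apply Nat.cast_injective (R := ℕ∞)
  rw [Nat.cast_add, ((hG.boxProd hH) x y).coe_dist_eq_edist, (hG _ _).coe_dist_eq_edist,
    (hH _ _).coe_dist_eq_edist, edist_boxProd]

section Star

variable {V : Type*} [DecidableEq V] {r u v : V}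

lemma starGraph_dist_center (v : V) : (starGraph r).dist v r = if v = r then 0 else 1 := by
  split_ifs with h
  · simp [h]
  · exact dist_eq_one_iff_adj.mpr (starGraph_center_adj' (Ne.symm h))

lemma starGraph_dist_of_ne_center (hu : u ≠ r) (hv : v ≠ r) (huv : u ≠ v) :
    (starGraph r).dist u v = 2 := by
  have hlow := (connected_starGraph r).one_lt_dist_of_ne_of_not_adj huv (by simp [hu, hv])
  have hup := (connected_starGraph r).dist_triangle (u := u) (v := r) (w := v)
  rw [starGraph_dist_center, dist_comm (u := r), starGraph_dist_center] at hup
  simp only [hu, hv, if_false] at hup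
  omega

lemma sum_starGraph_dist_center [Fintype V] (r : V) :
    ∑ v, (starGraph r).dist v r = Fintype.card V - 1 := by
  simp only [starGraph_dist_center, Finset.sum_ite, Finset.sum_const_zero, Finset.sum_const,
    smul_eq_mul, mul_one, zero_add, Finset.filter_ne', Finset.mem_univ,
    Finset.card_erase_of_mem, Finset.card_univ]

end Star

section Path

variable {n : ℕ}

lemma pathGraph_walk_length_ge {i j : Fin n} (w : (pathGraph n).Walk i j) :
    (j : ℕ) ≤ i + w.length := by
  induction w with
  | nil => simp
  | cons h _ ih =>
    rw [pathGraph_adj] at h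
    rw [Walk.length_cons]
    omega

lemma pathGraph_dist_le_of_add_eq (d : ℕ) {i j : Fin n} (h : (i : ℕ) + d = j) :
    (pathGraph n).dist i j ≤ d := by
  induction d generalizing i with
  | zero => simp [Fin.ext (by omega : (i : ℕ) = j)]
  | succ d ih =>
    have hi : (i : ℕ) + 1 < n := by omega
    have hadj : (pathGraph n).Adj i ⟨i + 1, hi⟩ := by simp [pathGraph_adj]
    have := hadj.reachable.dist_triangle_left j
    rw [dist_eq_one_iff_adj.mpr hadj] at this
    have := ih (i := ⟨i + 1, hi⟩) (by rw [Fin.val_mk]; omega)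
    omega

lemma pathGraph_dist (i j : Fin n) : (pathGraph n).dist i j = Nat.dist i j := by
  obtain ⟨w, hw⟩ := (pathGraph_preconnected n i j).exists_walk_length_eq_dist
  have hij := pathGraph_walk_length_ge w
  have hji := pathGraph_walk_length_ge w.reverse
  rw [Walk.length_reverse] at hji
  have hle : (pathGraph n).dist i j ≤ Nat.dist i j := by
    rcases le_total (i : ℕ) j with h | h
    · exact (pathGraph_dist_le_of_add_eq _ (Nat.add_sub_of_le h)).trans (by simp [Nat.dist])
    · rw [dist_comm]
      exact (pathGraph_dist_le_of_add_eq _ (Nat.add_sub_of_le h)).trans (by simp [Nat.dist])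
  unfold Nat.dist at hle ⊢
  omega

end Path

end SimpleGraph

lemma Nat.sum_fin_dist_middle (k : ℕ) : ∑ i : Fin (2 * k + 1), Nat.dist i k = k * (k + 1) := by
  rw [Fin.sum_univ_eq_sum_range (fun i => Nat.dist i k)]
  induction k with
  | zero => simp
  | succ k ih =>
    rw [show 2 * (k + 1) + 1 = 2 * k + 1 + 1 + 1 by ring, Finset.sum_range_succ,
      Finset.sum_range_succ']
    simp only [Nat.dist_add_add_right, ih]
    simp only [Nat.dist]
    ring_nf
    omega

section StackedBook

variable {m n : ℕ}

lemma starGraph_eq_starGraph_zero (hm : 0 < m) :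
    _root_.starGraph m = SimpleGraph.starGraph (⟨0, hm⟩ : Fin m) := by
  ext a b
  simp [_root_.starGraph, Fin.ext_iff]

lemma stackedBook_dist (hm : 0 < m) (u v : Fin m × Fin n) :
    (stackedBook m n).dist u v =
      (SimpleGraph.starGraph (⟨0, hm⟩ : Fin m)).dist u.1 v.1 + Nat.dist u.2 v.2 := by
  rw [stackedBook, starGraph_eq_starGraph_zero hm,
    dist_boxProd (connected_starGraph _).preconnected (pathGraph_preconnected n), pathGraph_dist]

lemma stackedBook_connected (hm : 0 < m) (hn : 0 < n) : (stackedBook m n).Connected := by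
  have : Nonempty (Fin n) := ⟨⟨0, hn⟩⟩
  rw [stackedBook, starGraph_eq_starGraph_zero hm]
  exact (connected_starGraph _).boxProd ⟨pathGraph_preconnected n⟩

lemma le_diam_stackedBook (hm : 3 ≤ m) (hn : 0 < n) : n + 1 ≤ (stackedBook m n).diam := by
  let u : Fin m × Fin n := (⟨1, by omega⟩, ⟨0, hn⟩)
  let v : Fin m × Fin n := (⟨2, by omega⟩, ⟨n - 1, by omega⟩)
  have : Nonempty (Fin m × Fin n) := ⟨u⟩
  have hfin : (stackedBook m n).ediam ≠ ⊤ :=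
    connected_iff_ediam_ne_top.mp (stackedBook_connected (by omega) hn)
  have huv : (stackedBook m n).dist u v = n + 1 := by
    rw [stackedBook_dist (by omega), starGraph_dist_of_ne_center
      (by simp [u, Fin.ext_iff]) (by simp [v, Fin.ext_iff]) (by simp [u, v, Fin.ext_iff])]
    simp only [u, v, Nat.dist, zero_tsub, tsub_zero, zero_add]
    omega
  exact huv ▸ dist_le_diam hfin

lemma sum_stackedBook_dist_center (hm : 0 < m) (k : ℕ) :
    ∑ v, (stackedBook m (2 * k + 1)).dist v (⟨0, hm⟩, ⟨k, by omega⟩) =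
      (m - 1) * (2 * k + 1) + m * (k * (k + 1)) := by
  simp only [stackedBook_dist hm, Finset.sum_add_distrib, Fintype.sum_prod_type,
    Finset.sum_const, Finset.card_univ, Fintype.card_fin, smul_eq_mul]
  rw [← Finset.mul_sum, sum_starGraph_dist_center, Fintype.card_fin, Nat.sum_fin_dist_middle,
    mul_comm]

end StackedBook

theorem stmt11_general (m n : ℕ) (hm : 4 ≤ m) (ho : Odd n) :
    (m * n ^ 2 + m + 2 * n - 4) / 2 ≤ radioNumber (stackedBook m n) := by
  obtain ⟨k, rfl⟩ := ho
  refine le_radioNumber fun f hf => ?_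
  have hbound := hf.card_sub_one_mul_le (stackedBook_connected (by omega) (by omega))
    (⟨0, by omega⟩, ⟨k, by omega⟩)
  rw [sum_stackedBook_dist_center, Fintype.card_prod, Fintype.card_fin, Fintype.card_fin]
    at hbound
  have hdiam := le_diam_stackedBook (m := m) (n := 2 * k + 1) (by omega) (by omega)
  have hmn : 1 ≤ m * (2 * k + 1) := Nat.one_le_iff_ne_zero.mpr (by positivity)
  have hmul := Nat.mul_le_mul_left (m * (2 * k + 1) - 1) (Nat.add_le_add_right hdiam 1)
  have h4 : 4 ≤ m * (2 * k + 1) ^ 2 + m + 2 * (2 * k + 1) := by omega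
  apply Nat.div_le_of_le_mul
  zify [hmn, h4, (by omega : 1 ≤ m)] at hbound hmul ⊢
  linarith

/-- lower bound `rn(G_{m,n}) ≥ (mn² + m + 2n - 4)/2` for `m ≥ 4`, odd `n ≥ 5`. -/
theorem stmt11 (m n : ℕ) (hm : 4 ≤ m) (hn : 5 ≤ n) (ho : Odd n) :
    (m * n ^ 2 + m + 2 * n - 4) / 2 ≤ radioNumber (stackedBook m n) :=
  stmt11_general m n hm ho
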